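/- Let d ≥ 1, let f : ℝ^d → ℝ^d be C¹, let D : ℝ^d → ℝ^{d×d} be C², and let q : ℝ^d → ℝ be a C² function with compact support. Then, with ℒq = −∑_{i=1}^d ∂_{x_i}(f_i q) + (1/2) ∑_{i,j=1}^d ∂_{x_i}∂_{x_j}(D_{ij} q) and b_i = (1/2) ∑_{j=1}^d ∂_{x_j} D_{ij} − f_i, the following integration-by-parts identity holds: −∫_{ℝ^d} (ℒq)(x) q(x) dx = (1/2) ∫_{ℝ^d} [ ∑_{i,j=1}^d D_{ij}(x) ∂_{x_i}q(x) ∂_{x_j}q(x) − (∇·b)(x) q(x)² ] dx. -/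

import Mathlib

/-! Write `ℒq = ∑ᵢ ∂ᵢ Jᵢ` with the current `Jᵢ = ½ ∑ⱼ ∂ⱼ(Dᵢⱼ q) - fᵢ q = bᵢ q + ½ ∑ⱼ Dᵢⱼ ∂ⱼq`.
By the product rule, `(ℒq) q` plus the integrand on the right-hand side is the divergence
`∑ᵢ ∂ᵢ Gᵢ` of `Gᵢ = Jᵢ q - ½ bᵢ q²`, a compactly supported `C¹` field, so its integral vanishes. -/

open MeasureTheory

/-- Partial derivative in the `i`-th coordinate direction. -/
noncomputable def pd {d : ℕ} (i : Fin d) (g : (Fin d → ℝ) → ℝ) : (Fin d → ℝ) → ℝ :=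
  fun x => fderiv ℝ g x (Pi.single i 1)

/-- The Fokker-Planck operator `ℒq = -∑ᵢ ∂ᵢ(fᵢ q) + (1/2) ∑ᵢⱼ ∂ᵢ∂ⱼ(Dᵢⱼ q)`. -/
noncomputable def fokkerPlanck {d : ℕ} (f : (Fin d → ℝ) → Fin d → ℝ)
    (D : (Fin d → ℝ) → Fin d → Fin d → ℝ) (q : (Fin d → ℝ) → ℝ) : (Fin d → ℝ) → ℝ :=
  fun x => -(∑ i, pd i (fun y => f y i * q y) x)
    + (1 / 2) * ∑ i, ∑ j, pd i (pd j (fun y => D y i j * q y)) x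

/-- The vector field `bᵢ = (1/2) ∑ⱼ ∂ⱼ Dᵢⱼ - fᵢ`. -/
noncomputable def bvec {d : ℕ} (f : (Fin d → ℝ) → Fin d → ℝ)
    (D : (Fin d → ℝ) → Fin d → Fin d → ℝ) : (Fin d → ℝ) → Fin d → ℝ :=
  fun x i => (1 / 2) * ∑ j, pd j (fun y => D y i j) x - f x i

/-- The divergence `∇·b = ∑ᵢ ∂ᵢ bᵢ` of the vector field `b`. -/
noncomputable def divb {d : ℕ} (f : (Fin d → ℝ) → Fin d → ℝ)
    (D : (Fin d → ℝ) → Fin d → Fin d → ℝ) : (Fin d → ℝ) → ℝ :=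
  fun x => ∑ i, pd i (fun y => bvec f D y i) x

section PartialDerivatives

variable {d : ℕ} {i : Fin d} {x : Fin d → ℝ}

lemma pd_sub {a b : (Fin d → ℝ) → ℝ} (ha : DifferentiableAt ℝ a x) (hb : DifferentiableAt ℝ b x) :
    pd i (fun y => a y - b y) x = pd i a x - pd i b x := by
  simp only [pd, fderiv_fun_sub ha hb, sub_apply]

lemma pd_const_mul {a : (Fin d → ℝ) → ℝ} (ha : DifferentiableAt ℝ a x) (c : ℝ) :
    pd i (fun y => c * a y) x = c * pd i a x := by
  simp only [pd, fderiv_const_mul ha, smul_apply, smul_eq_mul]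

lemma pd_sum {ι : Type*} {s : Finset ι} {a : ι → (Fin d → ℝ) → ℝ}
    (ha : ∀ j ∈ s, DifferentiableAt ℝ (a j) x) :
    pd i (fun y => ∑ j ∈ s, a j y) x = ∑ j ∈ s, pd i (a j) x := by
  simp only [pd, fderiv_fun_sum ha, sum_apply]

lemma pd_mul {a b : (Fin d → ℝ) → ℝ} (ha : DifferentiableAt ℝ a x) (hb : DifferentiableAt ℝ b x) :
    pd i (fun y => a y * b y) x = pd i a x * b x + a x * pd i b x := by
  simp only [pd, fderiv_fun_mul ha hb, add_apply, smul_apply, smul_eq_mul]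
  ring

lemma pd_pow_two {a : (Fin d → ℝ) → ℝ} (ha : DifferentiableAt ℝ a x) :
    pd i (fun y => a y ^ 2) x = 2 * a x * pd i a x := by
  simp only [sq, pd_mul ha ha]
  ring

lemma pd_eq_zero_of_notMem_tsupport {g : (Fin d → ℝ) → ℝ} (hx : x ∉ tsupport g) :
    pd i g x = 0 := by
  simp [pd, Function.notMem_support.1 fun h => hx (support_fderiv_subset ℝ h)]

lemma ContDiff.pd {n : ℕ∞} {g : (Fin d → ℝ) → ℝ} (hg : ContDiff ℝ (n + 1) g) (i : Fin d) :
    ContDiff ℝ n (pd i g) :=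
  (hg.fderiv_right le_rfl).clm_apply contDiff_const

lemma HasCompactSupport.pd {g : (Fin d → ℝ) → ℝ} (hg : HasCompactSupport g) (i : Fin d) :
    HasCompactSupport (pd i g) :=
  hg.fderiv_apply ℝ (Pi.single i 1)

lemma integral_pd_eq_zero {g : (Fin d → ℝ) → ℝ} (hg : ContDiff ℝ 1 g) (hgs : HasCompactSupport g)
    (i : Fin d) : ∫ x, pd i g x = 0 := by
  have hpd : Integrable (fun x => fderiv ℝ g x (Pi.single i 1) * 1) := by
    simp only [mul_one]
    exact (hg.pd (n := 0) i).continuous.integrable_of_hasCompactSupport (hgs.pd i)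
  have := integral_mul_fderiv_eq_neg_fderiv_mul_of_integrable hpd (by simp)
    (by simpa using hg.continuous.integrable_of_hasCompactSupport hgs)
    (fun x _ => hg.differentiable one_ne_zero x) (fun x _ => differentiableAt_const _)
  simpa [pd] using this.symm

end PartialDerivatives

section FokkerPlanck

variable {d : ℕ} {f : (Fin d → ℝ) → Fin d → ℝ} {D : (Fin d → ℝ) → Fin d → Fin d → ℝ}
  {q : (Fin d → ℝ) → ℝ}

noncomputable def fpCurrent (f : (Fin d → ℝ) → Fin d → ℝ) (D : (Fin d → ℝ) → Fin d → Fin d → ℝ)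
    (q : (Fin d → ℝ) → ℝ) : (Fin d → ℝ) → Fin d → ℝ :=
  fun y i => (1 / 2) * ∑ j, pd j (fun z => D z i j * q z) y - f y i * q y

lemma fokkerPlanck_eq_sum_pd_fpCurrent (hf : Differentiable ℝ f) (hD : ContDiff ℝ 2 D)
    (hq : ContDiff ℝ 2 q) (x : Fin d → ℝ) :
    fokkerPlanck f D q x = ∑ i, pd i (fun y => fpCurrent f D q y i) x := by
  rw [fokkerPlanck, neg_add_eq_sub, Finset.mul_sum, ← Finset.sum_sub_distrib]
  refine Finset.sum_congr rfl fun i _ => ?_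
  have hDq : ∀ j, DifferentiableAt ℝ (pd j fun z => D z i j * q z) x := fun j =>
    ((ContDiff.pd (n := 1) (by fun_prop) j).differentiable one_ne_zero) x
  have hfq : DifferentiableAt ℝ (fun y => f y i * q y) x := by
    have := hq.differentiable two_ne_zero
    fun_prop
  simp only [fpCurrent]
  rw [pd_sub ((DifferentiableAt.fun_sum fun j _ => hDq j).const_mul _) hfq,
    pd_const_mul (DifferentiableAt.fun_sum fun j _ => hDq j), pd_sum fun j _ => hDq j]

lemma fpCurrent_eq (hD : Differentiable ℝ D) (hq : Differentiable ℝ q) (y : Fin d → ℝ)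
    (i : Fin d) :
    fpCurrent f D q y i = bvec f D y i * q y + (1 / 2) * ∑ j, D y i j * pd j q y := by
  have hpd : ∀ j, pd j (fun z => D z i j * q z) y = pd j (fun z => D z i j) y * q y
      + D y i j * pd j q y := fun j => pd_mul (by fun_prop) (hq y)
  simp only [fpCurrent, bvec, hpd, Finset.sum_add_distrib, ← Finset.sum_mul]
  ring

lemma contDiff_bvec (hf : ContDiff ℝ 1 f) (hD : ContDiff ℝ 2 D) (i : Fin d) :
    ContDiff ℝ 1 fun y => bvec f D y i :=
  (contDiff_const.mul (ContDiff.sum fun j _ => ContDiff.pd (n := 1) (by fun_prop) j)).sub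
    (by fun_prop)

lemma contDiff_fpCurrent (hf : ContDiff ℝ 1 f) (hD : ContDiff ℝ 2 D) (hq : ContDiff ℝ 2 q)
    (i : Fin d) : ContDiff ℝ 1 fun y => fpCurrent f D q y i := by
  have hq1 : ContDiff ℝ 1 q := hq.of_le one_le_two
  exact (contDiff_const.mul (ContDiff.sum fun j _ => ContDiff.pd (n := 1) (by fun_prop) j)).sub
    (by fun_prop)

noncomputable def fpEnergyFlux (f : (Fin d → ℝ) → Fin d → ℝ)
    (D : (Fin d → ℝ) → Fin d → Fin d → ℝ) (q : (Fin d → ℝ) → ℝ) : (Fin d → ℝ) → Fin d → ℝ :=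
  fun y i => fpCurrent f D q y i * q y - (1 / 2) * bvec f D y i * q y ^ 2

lemma contDiff_fpEnergyFlux (hf : ContDiff ℝ 1 f) (hD : ContDiff ℝ 2 D) (hq : ContDiff ℝ 2 q)
    (i : Fin d) : ContDiff ℝ 1 fun y => fpEnergyFlux f D q y i := by
  have hq1 : ContDiff ℝ 1 q := hq.of_le one_le_two
  have hJ := contDiff_fpCurrent hf hD hq i
  have hb := contDiff_bvec hf hD i
  unfold fpEnergyFlux
  fun_prop

lemma hasCompactSupport_fpEnergyFlux (hq : HasCompactSupport q) (i : Fin d) :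
    HasCompactSupport fun y => fpEnergyFlux f D q y i :=
  hq.mono <| Function.support_subset_iff'.2 fun y hy => by
    simp [fpEnergyFlux, Function.notMem_support.1 hy]

lemma pd_fpEnergyFlux (hf : ContDiff ℝ 1 f) (hD : ContDiff ℝ 2 D) (hq : ContDiff ℝ 2 q)
    (x : Fin d → ℝ) (i : Fin d) :
    pd i (fun y => fpEnergyFlux f D q y i) x = pd i (fun y => fpCurrent f D q y i) x * q x
      + (1 / 2) * ∑ j, D x i j * pd i q x * pd j q x
      - (1 / 2) * pd i (fun y => bvec f D y i) x * q x ^ 2 := by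
  have hq1 : Differentiable ℝ q := hq.differentiable two_ne_zero
  have hJ := (contDiff_fpCurrent hf hD hq i).differentiable one_ne_zero x
  have hb := (contDiff_bvec hf hD i).differentiable one_ne_zero x
  have hDq : (∑ j, D x i j * pd j q x) * pd i q x = ∑ j, D x i j * pd i q x * pd j q x := by
    rw [Finset.sum_mul]
    exact Finset.sum_congr rfl fun j _ => by ring
  simp only [fpEnergyFlux]
  rw [pd_sub (by fun_prop) (by fun_prop), pd_mul hJ (hq1 x), pd_mul (by fun_prop) (by fun_prop),
    pd_const_mul hb, pd_pow_two (hq1 x), fpCurrent_eq (hD.differentiable two_ne_zero) hq1, ← hDq]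
  ring

lemma fokkerPlanck_mul_add_eq_sum_pd_fpEnergyFlux (hf : ContDiff ℝ 1 f) (hD : ContDiff ℝ 2 D)
    (hq : ContDiff ℝ 2 q) (x : Fin d → ℝ) :
    fokkerPlanck f D q x * q x
      + (1 / 2) * ((∑ i, ∑ j, D x i j * pd i q x * pd j q x) - divb f D x * q x ^ 2)
      = ∑ i, pd i (fun y => fpEnergyFlux f D q y i) x := by
  simp only [pd_fpEnergyFlux hf hD hq,
    fokkerPlanck_eq_sum_pd_fpCurrent (hf.differentiable one_ne_zero) hD hq, divb,
    Finset.sum_add_distrib, Finset.sum_sub_distrib, ← Finset.sum_mul, ← Finset.mul_sum]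
  ring

lemma integrable_pd_fpEnergyFlux (hf : ContDiff ℝ 1 f) (hD : ContDiff ℝ 2 D)
    (hq : ContDiff ℝ 2 q) (hqs : HasCompactSupport q) (i : Fin d) :
    Integrable fun x => pd i (fun y => fpEnergyFlux f D q y i) x :=
  ((contDiff_fpEnergyFlux hf hD hq i).pd (n := 0) i).continuous.integrable_of_hasCompactSupport
    ((hasCompactSupport_fpEnergyFlux hqs i).pd i)

lemma integrable_dirichlet_sub_divb_mul_sq (hf : ContDiff ℝ 1 f) (hD : ContDiff ℝ 2 D)
    (hq : ContDiff ℝ 2 q) (hqs : HasCompactSupport q) :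
    Integrable fun x => (∑ i, ∑ j, D x i j * pd i q x * pd j q x) - divb f D x * q x ^ 2 := by
  have hDc : Continuous D := hD.continuous
  have hpdq : ∀ i, Continuous (pd i q) := fun i => (hq.pd (n := 1) i).continuous
  have hdivb : Continuous (divb f D) :=
    continuous_finsetSum _ fun i _ => ((contDiff_bvec hf hD i).pd (n := 0) i).continuous
  refine Continuous.integrable_of_hasCompactSupport (by fun_prop) (hqs.mono' ?_)
  refine Function.support_subset_iff'.2 fun x hx => ?_
  simp [pd_eq_zero_of_notMem_tsupport hx, image_eq_zero_of_notMem_tsupport hx]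

end FokkerPlanck

theorem stmt_1_general {d : ℕ}
    (f : (Fin d → ℝ) → Fin d → ℝ) (hf : ContDiff ℝ 1 f)
    (D : (Fin d → ℝ) → Fin d → Fin d → ℝ) (hD : ContDiff ℝ 2 D)
    (q : (Fin d → ℝ) → ℝ) (hq : ContDiff ℝ 2 q) (hqsupp : HasCompactSupport q) :
    -∫ x, fokkerPlanck f D q x * q x
      = (1 / 2) * ∫ x,
          ((∑ i, ∑ j, D x i j * pd i q x * pd j q x) - divb f D x * (q x) ^ 2) := by
  have hflux := integrable_pd_fpEnergyFlux hf hD hq hqsupp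
  have hsplit : ∀ x, fokkerPlanck f D q x * q x = ∑ i, pd i (fun y => fpEnergyFlux f D q y i) x
      - (1 / 2) * ((∑ i, ∑ j, D x i j * pd i q x * pd j q x) - divb f D x * q x ^ 2) := fun x => by
    rw [← fokkerPlanck_mul_add_eq_sum_pd_fpEnergyFlux hf hD hq]
    ring
  simp_rw [hsplit]
  rw [integral_sub (integrable_finsetSum _ fun i _ => hflux i)
      ((integrable_dirichlet_sub_divb_mul_sq hf hD hq hqsupp).const_mul _),
    integral_finsetSum _ fun i _ => hflux i, integral_const_mul]
  simp [integral_pd_eq_zero (contDiff_fpEnergyFlux hf hD hq _)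
    (hasCompactSupport_fpEnergyFlux hqsupp _)]

/-- Integration-by-parts identity for the Fokker-Planck operator:
`-∫ (ℒq) q = (1/2) ∫ (∑ᵢⱼ Dᵢⱼ ∂ᵢq ∂ⱼq - (∇·b) q²)`. -/
theorem stmt_1 {d : ℕ} (hd : 1 ≤ d)
    (f : (Fin d → ℝ) → Fin d → ℝ) (hf : ContDiff ℝ 1 f)
    (D : (Fin d → ℝ) → Fin d → Fin d → ℝ) (hD : ContDiff ℝ 2 D)
    (q : (Fin d → ℝ) → ℝ) (hq : ContDiff ℝ 2 q) (hqsupp : HasCompactSupport q) :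
    -∫ x, fokkerPlanck f D q x * q x
      = (1 / 2) * ∫ x,
          ((∑ i, ∑ j, D x i j * pd i q x * pd j q x) - divb f D x * (q x) ^ 2) :=
  stmt_1_general f hf D hD q hq hqsupp
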